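/- Two-point characterization and mirror symmetry: Let A and B be unit vectors in ℝ³ with d = angle(A, B) ∈ (0, π), and let α ∈ (0, π) with d ≤ α. Then the set of unit vectors C satisfying angle(C, A) = angle(C, B) ≤ π/2 and spherical angle at C between A and B equal to α has exactly two elements C₁ and C₂, and C₂ is the image of C₁ under the orthogonal reflection of ℝ³ in the plane spanned by A and B. -/

import Mathlib

open Real InnerProductGeometry RealInnerProductSpace

private lemma inner3 (x y : EuclideanSpace ℝ (Fin 3)) :
    ⟪x, y⟫ = x 0 * y 0 + x 1 * y 1 + x 2 * y 2 := by
  simp [PiLp.inner_apply, Fin.sum_univ_three, RCLike.inner_apply]; ring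

/-- The spherical angle at `u` between `v` and `w`: the angle between the tangential
components of `v` and `w` at `u`. -/
noncomputable def sphAngle (u v w : EuclideanSpace ℝ (Fin 3)) : ℝ :=
  InnerProductGeometry.angle (v - ⟪v, u⟫ • u) (w - ⟪w, u⟫ • u)

private lemma cos_sphAngle' {C A B : EuclideanSpace ℝ (Fin 3)} {k : ℝ}
    (hA : ‖A‖ = 1) (hB : ‖B‖ = 1)
    (h1 : ⟪C, A⟫ = k) (h2 : ⟪C, B⟫ = k) (hCC : ⟪C, C⟫ = 1) (hk : k ^ 2 < 1) :
    Real.cos (sphAngle C A B) = (⟪A, B⟫ - k ^ 2) / (1 - k ^ 2) := by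
  have hAA : ⟪A, A⟫ = (1:ℝ) := by rw [real_inner_self_eq_norm_sq, hA]; norm_num
  have hBB : ⟪B, B⟫ = (1:ℝ) := by rw [real_inner_self_eq_norm_sq, hB]; norm_num
  have hAC : ⟪A, C⟫ = k := by rw [real_inner_comm]; exact h1
  have hBC : ⟪B, C⟫ = k := by rw [real_inner_comm]; exact h2
  have hPQ : ⟪A - ⟪A, C⟫ • C, B - ⟪B, C⟫ • C⟫ = ⟪A, B⟫ - k ^ 2 := by
    simp only [inner_sub_left, inner_sub_right, real_inner_smul_left,
      real_inner_smul_right, hAC, hBC, h1, h2, hCC]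
    ring
  have hPP : ⟪A - ⟪A, C⟫ • C, A - ⟪A, C⟫ • C⟫ = 1 - k ^ 2 := by
    simp only [inner_sub_left, inner_sub_right, real_inner_smul_left,
      real_inner_smul_right, hAC, hBC, h1, h2, hCC, hAA]
    ring
  have hQQ : ⟪B - ⟪B, C⟫ • C, B - ⟪B, C⟫ • C⟫ = 1 - k ^ 2 := by
    simp only [inner_sub_left, inner_sub_right, real_inner_smul_left,
      real_inner_smul_right, hAC, hBC, h1, h2, hCC, hBB]
    ring
  have hnP : ‖A - ⟪A, C⟫ • C‖ = Real.sqrt (1 - k ^ 2) := by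
    rw [norm_eq_sqrt_real_inner, hPP]
  have hnQ : ‖B - ⟪B, C⟫ • C‖ = Real.sqrt (1 - k ^ 2) := by
    rw [norm_eq_sqrt_real_inner, hQQ]
  unfold sphAngle
  rw [cos_angle, hPQ, hnP, hnQ, Real.mul_self_sqrt (by linarith)]

set_option maxHeartbeats 3200000 in
/-- Two-point characterization and mirror symmetry: the set of apexes of isosceles spherical
triangles over base `AB` with apex angle `α` and legs `≤ π/2` has exactly two elements, and
they are mirror images in the plane spanned by `A` and `B`. -/
theorem isosceles_spherical_triangle_two_points (A B : EuclideanSpace ℝ (Fin 3))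
    (hA : ‖A‖ = 1) (hB : ‖B‖ = 1) (d α : ℝ) (hd : d = angle A B)
    (hd0 : 0 < d) (hdπ : d < π) (hα0 : 0 < α) (hαπ : α < π) (hdα : d ≤ α) :
    ∃ C₁ C₂ : EuclideanSpace ℝ (Fin 3), C₁ ≠ C₂ ∧
      {C : EuclideanSpace ℝ (Fin 3) | ‖C‖ = 1 ∧
          angle C A = angle C B ∧ angle C A ≤ π / 2 ∧ sphAngle C A B = α} = {C₁, C₂} ∧
      C₂ = Submodule.reflection (Submodule.span ℝ {A, B}) C₁ := by
  have hAA : ⟪A, A⟫ = (1:ℝ) := by rw [real_inner_self_eq_norm_sq, hA]; norm_num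
  have hBB : ⟪B, B⟫ = (1:ℝ) := by rw [real_inner_self_eq_norm_sq, hB]; norm_num
  obtain ⟨cd, hcddef⟩ : ∃ cd : ℝ, cd = ⟪A, B⟫ := ⟨_, rfl⟩
  obtain ⟨cA, hcAdef⟩ : ∃ cA : ℝ, cA = Real.cos α := ⟨_, rfl⟩
  have hcosd : Real.cos d = cd := by
    rw [hd, cos_angle, hA, hB, mul_one, div_one, hcddef]
  -- basic bounds on cd and cA
  have hd01 : d ∈ Set.Icc 0 π := ⟨hd0.le, hdπ.le⟩
  have hcd1 : cd < 1 := by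
    rw [← hcosd]
    have := Real.strictAntiOn_cos (Set.mem_Icc.2 ⟨le_refl 0, Real.pi_pos.le⟩) hd01 hd0
    simpa using this
  have hcdm1 : -1 < cd := by
    rw [← hcosd]
    have := Real.strictAntiOn_cos hd01 (Set.mem_Icc.2 ⟨Real.pi_pos.le, le_refl π⟩) hdπ
    simpa using this
  have hcA1 : cA < 1 := by
    rw [hcAdef]
    have := Real.strictAntiOn_cos (Set.mem_Icc.2 ⟨le_refl 0, Real.pi_pos.le⟩)
      ⟨hα0.le, hαπ.le⟩ hα0
    simpa using this
  have hcAm1 : -1 < cA := by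
    rw [hcAdef]
    have := Real.strictAntiOn_cos ⟨hα0.le, hαπ.le⟩
      (Set.mem_Icc.2 ⟨Real.pi_pos.le, le_refl π⟩) hαπ
    simpa using this
  have hcAcd : cA ≤ cd := by
    rw [hcAdef, ← hcosd]
    exact Real.cos_le_cos_of_nonneg_of_le_pi hd0.le hαπ.le hdα
  have h1cd : (0:ℝ) < 1 + cd := by linarith
  have h1cd' : (0:ℝ) < 1 - cd := by linarith
  have hden : (0:ℝ) < 1 - cd ^ 2 := by
    have h := mul_pos h1cd h1cd'
    have h2 : (1 + cd) * (1 - cd) = 1 - cd ^ 2 := by ring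
    linarith
  have h1cA : (0:ℝ) < 1 - cA := by linarith
  -- the quantity u = cos² of the leg
  obtain ⟨u, hudef⟩ : ∃ u : ℝ, u = (cd - cA) / (1 - cA) := ⟨_, rfl⟩
  have hu0 : 0 ≤ u := hudef ▸ div_nonneg (by linarith) (by linarith)
  have huval : u * (1 - cA) = cd - cA := hudef ▸ div_mul_cancel₀ _ (ne_of_gt h1cA)
  have hu2 : 2 * u < 1 + cd := by
    have h : u < (1 + cd) / 2 := by
      rw [hudef, div_lt_div_iff₀ h1cA two_pos]
      have h := mul_pos h1cd' (by linarith : (0:ℝ) < 1 + cA)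
      have h2 : (1 - cd) * (1 + cA) = 1 + cA - cd - cd * cA := by ring
      nlinarith [h, h2]
    linarith
  have hu1 : u < 1 := by linarith
  obtain ⟨k, hkdef⟩ : ∃ k : ℝ, k = Real.sqrt u := ⟨_, rfl⟩
  have hk0 : 0 ≤ k := hkdef ▸ Real.sqrt_nonneg u
  have hk2 : k ^ 2 = u := hkdef ▸ Real.sq_sqrt hu0
  have hk1 : k ^ 2 < 1 := by rw [hk2]; exact hu1
  obtain ⟨s, hsdef⟩ : ∃ s : ℝ, s = k / (1 + cd) := ⟨_, rfl⟩
  have hkval : s * (1 + cd) = k := hsdef ▸ div_mul_cancel₀ _ (ne_of_gt h1cd)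
  -- the normal vector n = A × B
  obtain ⟨n, hn0, hn1, hn2⟩ : ∃ n : EuclideanSpace ℝ (Fin 3),
      n 0 = A 1 * B 2 - A 2 * B 1 ∧ n 1 = A 2 * B 0 - A 0 * B 2 ∧
      n 2 = A 0 * B 1 - A 1 * B 0 :=
    ⟨(WithLp.equiv 2 (Fin 3 → ℝ)).symm
      ![A 1 * B 2 - A 2 * B 1, A 2 * B 0 - A 0 * B 2, A 0 * B 1 - A 1 * B 0],
      by rfl, by rfl,
      by rfl⟩
  have hA3 : A 0 ^ 2 + A 1 ^ 2 + A 2 ^ 2 = 1 := by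
    have h := inner3 A A; rw [hAA] at h; linear_combination -h
  have hB3 : B 0 ^ 2 + B 1 ^ 2 + B 2 ^ 2 = 1 := by
    have h := inner3 B B; rw [hBB] at h; linear_combination -h
  have hcd3 : cd = A 0 * B 0 + A 1 * B 1 + A 2 * B 2 := by
    rw [hcddef, inner3]
  have hnA : ⟪n, A⟫ = 0 := by rw [inner3, hn0, hn1, hn2]; ring
  have hnB : ⟪n, B⟫ = 0 := by rw [inner3, hn0, hn1, hn2]; ring
  have hAn : ⟪A, n⟫ = 0 := by rw [real_inner_comm]; exact hnA
  have hBn : ⟪B, n⟫ = 0 := by rw [real_inner_comm]; exact hnB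
  have hnn : ⟪n, n⟫ = 1 - cd ^ 2 := by
    rw [inner3, hn0, hn1, hn2, hcd3]
    linear_combination (B 0 ^ 2 + B 1 ^ 2 + B 2 ^ 2) * hA3 + hB3
  have hAB : ⟪A, B⟫ = cd := hcddef.symm
  have hBA : ⟪B, A⟫ = cd := by rw [real_inner_comm]; exact hAB
  -- inner product expansions
  have hinner : ∀ a b a' b' : ℝ, ⟪a • (A + B) + b • n, a' • (A + B) + b' • n⟫
      = (a * a') * (2 + 2 * cd) + (b * b') * (1 - cd ^ 2) := by
    intro a b a' b'
    simp only [inner_add_left, inner_add_right, real_inner_smul_left, real_inner_smul_right,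
      hAA, hBB, hnn, hnA, hnB, hAn, hBn, hAB, hBA]
    ring
  have hinnerA : ∀ a b : ℝ, ⟪a • (A + B) + b • n, A⟫ = a * (1 + cd) := by
    intro a b
    simp only [inner_add_left, inner_add_right, real_inner_smul_left, hAA, hBA, hnA]
    ring
  have hinnerB : ∀ a b : ℝ, ⟪a • (A + B) + b • n, B⟫ = a * (1 + cd) := by
    intro a b
    simp only [inner_add_left, inner_add_right, real_inner_smul_left, hBB, hAB, hnB]
    ring
  have hinnerN : ∀ a b : ℝ, ⟪a • (A + B) + b • n, n⟫ = b * (1 - cd ^ 2) := by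
    intro a b
    simp only [inner_add_left, inner_add_right, real_inner_smul_left, hAn, hBn, hnn]
    ring
  -- kernel lemma: a vector orthogonal to A, B, n is zero
  have hker : ∀ v : EuclideanSpace ℝ (Fin 3),
      ⟪v, A⟫ = 0 → ⟪v, B⟫ = 0 → ⟪v, n⟫ = 0 → v = 0 := by
    intro v h1 h2 h3
    rw [inner3] at h1 h2
    rw [inner3, hn0, hn1, hn2] at h3
    rw [← @inner_self_eq_zero ℝ, inner3]
    have hid : (v 0 * v 0 + v 1 * v 1 + v 2 * v 2) *
        ((A 0 ^ 2 + A 1 ^ 2 + A 2 ^ 2) * (B 0 ^ 2 + B 1 ^ 2 + B 2 ^ 2)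
          - (A 0 * B 0 + A 1 * B 1 + A 2 * B 2) ^ 2)
        = (v 0 * (A 1 * B 2 - A 2 * B 1) + v 1 * (A 2 * B 0 - A 0 * B 2)
            + v 2 * (A 0 * B 1 - A 1 * B 0)) ^ 2
          + ((v 0 * B 0 + v 1 * B 1 + v 2 * B 2) * A 0
              - (v 0 * A 0 + v 1 * A 1 + v 2 * A 2) * B 0) ^ 2
          + ((v 0 * B 0 + v 1 * B 1 + v 2 * B 2) * A 1
              - (v 0 * A 0 + v 1 * A 1 + v 2 * A 2) * B 1) ^ 2
          + ((v 0 * B 0 + v 1 * B 1 + v 2 * B 2) * A 2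
              - (v 0 * A 0 + v 1 * A 1 + v 2 * A 2) * B 2) ^ 2 := by ring
    rw [h1, h2, h3, hA3, hB3, ← hcd3] at hid
    have h0 : (v 0 * v 0 + v 1 * v 1 + v 2 * v 2) * (1 - cd ^ 2) = 0 := by
      linear_combination hid
    rcases mul_eq_zero.mp h0 with h | h
    · exact h
    · linarith
  -- the coefficient t along n
  obtain ⟨t, htdef⟩ : ∃ t : ℝ,
      t = Real.sqrt ((1 + cd - 2 * u) / ((1 + cd) * (1 - cd ^ 2))) := ⟨_, rfl⟩
  have ht0 : 0 < t := htdef ▸ Real.sqrt_pos.2 (div_pos (by linarith) (mul_pos h1cd hden))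
  have ht2 : t ^ 2 = (1 + cd - 2 * u) / ((1 + cd) * (1 - cd ^ 2)) :=
    htdef ▸ Real.sq_sqrt (le_of_lt (div_pos (by linarith) (mul_pos h1cd hden)))
  have keyval : s ^ 2 * (2 + 2 * cd) + t ^ 2 * (1 - cd ^ 2) = 1 := by
    rw [ht2, hsdef, div_pow, hk2]
    field_simp
    ring
  -- the two candidate points
  obtain ⟨C₁, hC1def⟩ : ∃ C₁ : EuclideanSpace ℝ (Fin 3), C₁ = s • (A + B) + t • n := ⟨_, rfl⟩
  obtain ⟨C₂, hC2def⟩ : ∃ C₂ : EuclideanSpace ℝ (Fin 3), C₂ = s • (A + B) + (-t) • n := ⟨_, rfl⟩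
  have hnne : n ≠ 0 := by
    intro h
    have h0 : ⟪n, n⟫ = (0:ℝ) := by rw [h]; simp
    rw [hnn] at h0
    exact (ne_of_gt hden) h0
  have hne : C₁ ≠ C₂ := by
    intro h
    rw [hC1def, hC2def] at h
    have : (2 * t) • n = 0 := by
      have h2 : t • n - (-t) • n = 0 := by
        rw [sub_eq_zero]
        exact add_left_cancel h
      rw [← h2]; module
    rcases smul_eq_zero.mp this with h | h
    · linarith
    · exact hnne h
  -- membership of both points
  have hmem : ∀ b : ℝ, b * b = t * t → (‖s • (A + B) + b • n‖ = 1 ∧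
      angle (s • (A + B) + b • n) A = angle (s • (A + B) + b • n) B ∧
      angle (s • (A + B) + b • n) A ≤ π / 2 ∧
      sphAngle (s • (A + B) + b • n) A B = α) := by
    intro b hb
    have hXX : ⟪s • (A + B) + b • n, s • (A + B) + b • n⟫ = 1 := by
      rw [hinner]
      linear_combination keyval + (1 - cd ^ 2) * hb
    have hnX : ‖s • (A + B) + b • n‖ = 1 := by
      rw [norm_eq_sqrt_real_inner, hXX]; exact Real.sqrt_one
    have hXA : ⟪s • (A + B) + b • n, A⟫ = k := by rw [hinnerA]; exact hkval
    have hXB : ⟪s • (A + B) + b • n, B⟫ = k := by rw [hinnerB]; exact hkval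
    have hangA : angle (s • (A + B) + b • n) A = Real.arccos k := by
      unfold InnerProductGeometry.angle
      rw [hXA, hnX, hA]; norm_num
    have hangB : angle (s • (A + B) + b • n) B = Real.arccos k := by
      unfold InnerProductGeometry.angle
      rw [hXB, hnX, hB]; norm_num
    refine ⟨hnX, by rw [hangA, hangB], ?_, ?_⟩
    · rw [hangA]; exact Real.arccos_le_pi_div_two.2 hk0
    · have hratio : (cd - k ^ 2) / (1 - k ^ 2) = cA := by
        rw [hk2, div_eq_iff (by linarith : (1:ℝ) - u ≠ 0)]
        linear_combination -huval
      have hcos := cos_sphAngle' hA hB hXA hXB hXX hk1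
      rw [hAB, hratio] at hcos
      refine Real.injOn_cos ⟨?_, ?_⟩ ⟨hα0.le, hαπ.le⟩ (by rw [hcos, hcAdef])
      · exact angle_nonneg _ _
      · exact angle_le_pi _ _
  -- the reflection claim
  have hrefl : C₂ = Submodule.reflection (Submodule.span ℝ {A, B}) C₁ := by
    have hAmem : A ∈ Submodule.span ℝ ({A, B} : Set (EuclideanSpace ℝ (Fin 3))) :=
      Submodule.subset_span (Set.mem_insert _ _)
    have hBmem : B ∈ Submodule.span ℝ ({A, B} : Set (EuclideanSpace ℝ (Fin 3))) :=
      Submodule.subset_span (Set.mem_insert_of_mem _ rfl)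
    have hWmem : s • (A + B) ∈ Submodule.span ℝ ({A, B} : Set (EuclideanSpace ℝ (Fin 3))) :=
      Submodule.smul_mem _ _ (Submodule.add_mem _ hAmem hBmem)
    have hproj : ((Submodule.span ℝ {A, B}).starProjection C₁ :
        EuclideanSpace ℝ (Fin 3)) = s • (A + B) := by
      refine Submodule.eq_starProjection_of_mem_of_inner_eq_zero hWmem ?_
      intro w hw
      have hC1W : C₁ - s • (A + B) = t • n := by rw [hC1def]; abel
      rw [hC1W]
      induction hw using Submodule.span_induction with
      | mem x hx =>
        rcases hx with h | h
        · rw [h, real_inner_smul_left, hnA]; ring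
        · rw [Set.mem_singleton_iff] at h
          rw [h, real_inner_smul_left, hnB]; ring
      | zero => exact inner_zero_right _
      | add x y hx hy ihx ihy => rw [inner_add_right, ihx, ihy]; ring
      | smul c x hx ihx => rw [real_inner_smul_right, ihx]; ring
    rw [Submodule.reflection_apply, hproj, hC1def, hC2def]
    module
  refine ⟨C₁, C₂, hne, ?_, hrefl⟩
  -- the set equality
  ext C
  simp only [Set.mem_setOf_eq, Set.mem_insert_iff, Set.mem_singleton_iff]
  constructor
  · rintro ⟨hC, heq, hle, hsph⟩
    have hCC : ⟪C, C⟫ = 1 := by rw [real_inner_self_eq_norm_sq, hC]; norm_num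
    obtain ⟨k', hk'def⟩ : ∃ k' : ℝ, k' = ⟪C, A⟫ := ⟨_, rfl⟩
    have hCB : ⟪C, B⟫ = k' := by
      have h := congrArg Real.cos heq
      rw [cos_angle, cos_angle, hC, hA, hB, mul_one, div_one, div_one] at h
      rw [← h, hk'def]
    have hk'0 : 0 ≤ k' := by
      have h1 : Real.cos (angle C A) = k' := by
        rw [cos_angle, hC, hA, mul_one, div_one, hk'def]
      rw [← h1]
      exact Real.cos_nonneg_of_mem_Icc ⟨by linarith [angle_nonneg C A, Real.pi_pos], hle⟩
    have hk'le : k' ≤ 1 := by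
      have h := real_inner_le_norm C A
      rw [hC, hA, mul_one] at h
      rw [hk'def]; exact h
    have hk'lt : k' < 1 := by
      rcases lt_or_eq_of_le hk'le with h | h
      · exact h
      · exfalso
        have h' : ⟪C, A⟫ = 1 := by rw [← hk'def]; exact h
        have hCA : C = A := (inner_eq_one_iff_of_norm_eq_one hC hA).1 h'
        rw [hCA, hAB] at hCB
        rw [← hCB] at h
        linarith
    have hk'sq : k' ^ 2 < 1 := by
      have h := mul_lt_mul' hk'le hk'lt hk'0 one_pos
      have h2 : k' ^ 2 = k' * k' := sq k'
      linarith
    have hcos := cos_sphAngle' hA hB hk'def.symm hCB hCC hk'sq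
    rw [hsph, hAB] at hcos
    have hk'u : k' ^ 2 = u := by
      rw [← hcAdef] at hcos
      have h5 : cA * (1 - k' ^ 2) = cd - k' ^ 2 := by
        rw [hcos]
        exact div_mul_cancel₀ _ (ne_of_gt (by linarith : (0:ℝ) < 1 - k' ^ 2))
      rw [hudef, eq_div_iff (ne_of_gt h1cA)]
      linear_combination h5
    have hk'k : k' = k := by
      have h1 : k' = Real.sqrt (k' ^ 2) := (Real.sqrt_sq hk'0).symm
      rw [h1, hk'u, ← hkdef]
    -- decompose C
    obtain ⟨r, hrdef⟩ : ∃ r : ℝ, r = ⟪C, n⟫ / (1 - cd ^ 2) := ⟨_, rfl⟩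
    have hrval : r * (1 - cd ^ 2) = ⟪C, n⟫ := hrdef ▸ div_mul_cancel₀ _ (ne_of_gt hden)
    have hD : C - (s • (A + B) + r • n) = 0 := by
      apply hker
      · rw [inner_sub_left, hinnerA, hkval, ← hk'def, hk'k]; ring
      · rw [inner_sub_left, hinnerB, hkval, hCB, hk'k]; ring
      · rw [inner_sub_left, hinnerN, hrval]; ring
    have hCform : C = s • (A + B) + r • n := by
      rw [← sub_eq_zero]; exact hD
    have hr2 : r ^ 2 = t ^ 2 := by
      have h1 : s ^ 2 * (2 + 2 * cd) + r ^ 2 * (1 - cd ^ 2) = 1 := by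
        have h2 := hinner s r s r
        rw [← hCform, hCC] at h2
        linear_combination -h2
      have h3 : r ^ 2 * (1 - cd ^ 2) = t ^ 2 * (1 - cd ^ 2) := by linarith [keyval]
      exact mul_right_cancel₀ (ne_of_gt hden) h3
    have : (r - t) * (r + t) = 0 := by linear_combination hr2
    rcases mul_eq_zero.mp this with h | h
    · left
      rw [hCform, hC1def, show r = t by linarith]
    · right
      rw [hCform, hC2def, show r = -t by linarith]
  · rintro (rfl | rfl)
    · rw [hC1def]
      exact hmem t rfl
    · rw [hC2def]
      exact hmem (-t) (by ring)
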